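/- For b ≥ 2, let φ = (√(b²+4) - b)/2 be the fractional part of the b-th metallic ratio. For every integer j with 0 ≤ j ≤ b-2, set y_j = φ/(1 - j·φ) (the j-th iterate of φ under the left branch T₁(x)=x/(1-x)) and c_j = (1-φ)/(1 - j·φ). Then the reduced entropy density of the Haros graph of y_j, computed from its explicit degree distribution P(2)=y_j, P(3)=1-2y_j, P(bn+3-j)=c_j·φⁿ for n ≥ 1, satisfies (y_j·log y_j - ∑_{n=1}^{∞} c_j·φⁿ·log(c_j·φⁿ)) / y_j = -log(1-φ) - ((1+φ)/b)·log φ; in particular this value is independent of j, so the entropy density is constant along the periodic RG orbit of the metallic ratio. -/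

import Mathlib

/-!
Split the tail weights `c φⁿ` by `log (c φⁿ) = log c + n log φ`: the entropy tail becomes a
combination of the geometric series `∑ φⁿ` and `∑ n φⁿ`, and equals
`y (log c + log φ / (1 - φ))` because `y = c φ / (1 - φ)`. Dividing by `y`, the only trace of `j`
left is `log y - log c = log (φ / (1 - φ))`, and the quadratic `φ² + b φ = 1` turns
`φ / (1 - φ)` into `(1 + φ) / b`.
-/

open Real

lemma hasSum_pow_succ_of_norm_lt_one {r : ℝ} (hr : ‖r‖ < 1) :
    HasSum (fun n : ℕ => r ^ (n + 1)) (r / (1 - r)) := by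
  simpa only [pow_succ', div_eq_mul_inv] using (hasSum_geometric_of_norm_lt_one hr).mul_left r

lemma hasSum_succ_mul_pow_succ_of_norm_lt_one {r : ℝ} (hr : ‖r‖ < 1) :
    HasSum (fun n : ℕ => ((n : ℝ) + 1) * r ^ (n + 1)) (r / (1 - r) ^ 2) := by
  simpa using (hasSum_nat_add_iff' (f := fun n : ℕ => (n : ℝ) * r ^ n) 1).2
    (hasSum_coe_mul_geometric_of_norm_lt_one hr)

lemma hasSum_mul_pow_succ_mul_log {c r : ℝ} (hc : c ≠ 0) (hr₀ : r ≠ 0) (hr : ‖r‖ < 1) :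
    HasSum (fun n : ℕ => c * r ^ (n + 1) * log (c * r ^ (n + 1)))
      (c * r / (1 - r) * (log c + log r / (1 - r))) := by
  have hr₁ : 1 - r ≠ 0 := sub_ne_zero.2 (ne_of_lt (lt_of_le_of_lt (le_abs_self r) hr)).symm
  have split : ∀ n : ℕ, c * r ^ (n + 1) * log (c * r ^ (n + 1)) =
      c * log c * r ^ (n + 1) + c * log r * (((n : ℝ) + 1) * r ^ (n + 1)) := fun n => by
    rw [log_mul hc (pow_ne_zero _ hr₀), log_pow]
    push_cast
    ring
  have value : c * r / (1 - r) * (log c + log r / (1 - r)) =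
      c * log c * (r / (1 - r)) + c * log r * (r / (1 - r) ^ 2) := by
    field_simp
  simp_rw [split, value]
  exact ((hasSum_pow_succ_of_norm_lt_one hr).mul_left (c * log c)).add
    ((hasSum_succ_mul_pow_succ_of_norm_lt_one hr).mul_left (c * log r))

theorem geometric_tail_entropy_density {c r y : ℝ} (hc : c ≠ 0) (hr₀ : 0 < r) (hr₁ : r < 1)
    (hy : y = c * r / (1 - r)) :
    (y * log y - ∑' n : ℕ, c * r ^ (n + 1) * log (c * r ^ (n + 1))) / y
      = -log (1 - r) - r / (1 - r) * log r := by
  have hr : ‖r‖ < 1 := by rwa [norm_of_nonneg hr₀.le]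
  have h1r : 1 - r ≠ 0 := by linarith
  have hy₀ : y ≠ 0 := by rw [hy]; exact div_ne_zero (mul_ne_zero hc hr₀.ne') h1r
  have hlog_y : log y = log c + log r - log (1 - r) := by
    rw [hy, log_div (mul_ne_zero hc hr₀.ne') h1r, log_mul hc hr₀.ne']
  rw [(hasSum_mul_pow_succ_mul_log hc hr₀.ne' hr).tsum_eq, ← hy, hlog_y]
  field_simp
  ring

noncomputable def metallicFrac (b : ℝ) : ℝ := (√(b ^ 2 + 4) - b) / 2

lemma metallicFrac_pos (b : ℝ) : 0 < metallicFrac b := by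
  have hs : b ^ 2 < √(b ^ 2 + 4) ^ 2 := by rw [sq_sqrt (by positivity)]; linarith
  have : b < √(b ^ 2 + 4) := lt_of_abs_lt (abs_lt_of_sq_lt_sq hs (sqrt_nonneg _))
  unfold metallicFrac
  linarith

lemma metallicFrac_sq_add_mul (b : ℝ) : metallicFrac b ^ 2 + b * metallicFrac b = 1 := by
  have hs : √(b ^ 2 + 4) ^ 2 = b ^ 2 + 4 := sq_sqrt (by positivity)
  unfold metallicFrac
  linear_combination hs / 4

lemma mul_metallicFrac_lt_one {b : ℝ} (hb : 0 ≤ b) : b * metallicFrac b < 1 := by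
  nlinarith [metallicFrac_pos b, metallicFrac_sq_add_mul b]

lemma metallicFrac_lt_one {b : ℝ} (hb : 0 < b) : metallicFrac b < 1 := by
  nlinarith [metallicFrac_pos b, metallicFrac_sq_add_mul b]

lemma metallicFrac_div_one_sub {b : ℝ} (hb : 0 < b) :
    metallicFrac b / (1 - metallicFrac b) = (1 + metallicFrac b) / b := by
  have h1 : 1 - metallicFrac b ≠ 0 := (sub_pos.2 (metallicFrac_lt_one hb)).ne'
  rw [div_eq_div_iff h1 hb.ne']
  linear_combination metallicFrac_sq_add_mul b

theorem stmt17 (b : ℕ) (hb : 2 ≤ b) (j : ℕ) (hj : j ≤ b - 2) :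
    let φ : ℝ := (Real.sqrt ((b : ℝ)^2 + 4) - b) / 2
    let y : ℝ := φ / (1 - (j : ℝ) * φ)
    let c : ℝ := (1 - φ) / (1 - (j : ℝ) * φ)
    (y * Real.log y -
        ∑' n : ℕ, c * φ^(n+1) * Real.log (c * φ^(n+1))) / y
      = -Real.log (1 - φ) - ((1 + φ) / (b : ℝ)) * Real.log φ := by
  intro φ y c
  have hb₀ : (0 : ℝ) < b := by positivity
  have hφ₀ : 0 < φ := metallicFrac_pos b
  have hφ₁ : φ < 1 := metallicFrac_lt_one hb₀
  have hjφ : (j : ℝ) * φ < 1 :=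
    lt_of_le_of_lt (mul_le_mul_of_nonneg_right (by exact_mod_cast (by omega : j ≤ b))
      hφ₀.le) (mul_metallicFrac_lt_one hb₀.le)
  have hc : c ≠ 0 := div_ne_zero (by linarith) (by linarith)
  have hy : y = c * φ / (1 - φ) := by
    simp only [y, c]
    field_simp [(by linarith : 1 - φ ≠ 0)]
  rw [geometric_tail_entropy_density hc hφ₀ hφ₁ hy,
    ← show φ / (1 - φ) = (1 + φ) / b from metallicFrac_div_one_sub hb₀]
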